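/- arXiv:2309.09391 — 2 statements merged into one kernel-verified Lean document; each statement's English description precedes it below -/
import Mathlib

section
/- Let E be a real normed space and n ≥ 1. Suppose ω : ℝⁿ → E is differentiable everywhere, satisfies (Dω)(x)(x) = 0 for all x ∈ ℝⁿ (i.e. ∑_μ x^μ ∂_μ ω(x) = 0, so ω is constant along every ray from the origin), and ω(x) → 0 as ‖x‖ → ∞. Then ω = 0 identically. -/
/-! The derivative of `r ↦ ω (r • x)` at `r ≠ 0` is `r⁻¹ • (Dω)(r • x)(r • x) = 0`, so `ω` is
constant on each open ray `{r • x | r > 0}`. For `x ≠ 0` the ray escapes to infinity, where `ω`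
tends to `0`, so `ω x = 0`; finally `ω 0 = 0` by continuity, since `{0}ᶜ` is dense. -/

open Filter Set

section

variable {F E : Type*} [NormedAddCommGroup F] [NormedSpace ℝ F]
  [NormedAddCommGroup E] [NormedSpace ℝ E] {ω : F → E}

theorem fderiv_apply_eq_zero_of_fderiv_apply_self_eq_zero
    (hray : ∀ x, fderiv ℝ ω x x = 0) (x : F) {r : ℝ} (hr : r ≠ 0) :
    fderiv ℝ ω (r • x) x = 0 := by
  simpa [hr] using hray (r • x)

theorem hasDerivAt_comp_smul (hω : Differentiable ℝ ω) (x : F) (r : ℝ) :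
    HasDerivAt (fun s : ℝ => ω (s • x)) (fderiv ℝ ω (r • x) x) r := by
  simpa [Function.comp_def] using
    (hω (r • x)).hasFDerivAt.comp_hasDerivAt r ((hasDerivAt_id r).smul_const x)

theorem apply_smul_eq_of_fderiv_apply_self_eq_zero (hω : Differentiable ℝ ω)
    (hray : ∀ x, fderiv ℝ ω x x = 0) (x : F) {r : ℝ} (hr : 0 < r) :
    ω (r • x) = ω x := by
  have hderiv : ∀ s : ℝ, s ≠ 0 → HasDerivAt (fun s : ℝ => ω (s • x)) 0 s := fun s hs => by
    simpa [fderiv_apply_eq_zero_of_fderiv_apply_self_eq_zero hray x hs]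
      using hasDerivAt_comp_smul hω x s
  simpa using isOpen_Ioi.is_const_of_deriv_eq_zero isPreconnected_Ioi
    (fun s hs => (hderiv s hs.out.ne').differentiableAt.differentiableWithinAt)
    (fun s hs => (hderiv s (ne_of_gt hs)).deriv) hr (mem_Ioi.2 one_pos)

theorem tendsto_smul_atTop_comap_norm_atTop {x : F} (hx : x ≠ 0) :
    Tendsto (fun r : ℝ => r • x) atTop (comap (fun y => ‖y‖) atTop) := by
  rw [tendsto_comap_iff]
  simpa [Function.comp_def, norm_smul] using
    tendsto_abs_atTop_atTop.atTop_mul_const (norm_pos_iff.2 hx)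

theorem eq_zero_of_fderiv_apply_self_eq_zero_of_tendsto [Nontrivial F] (hω : Differentiable ℝ ω)
    (hray : ∀ x, fderiv ℝ ω x x = 0) (hinf : Tendsto ω (comap (fun x => ‖x‖) atTop) (nhds 0)) :
    ω = 0 := by
  have hne : ∀ x ∈ ({0}ᶜ : Set F), ω x = 0 := fun x hx => by
    refine tendsto_nhds_unique ?_ (hinf.comp (tendsto_smul_atTop_comap_norm_atTop hx))
    refine tendsto_const_nhds.congr' ?_
    filter_upwards [eventually_gt_atTop 0] with r hr
    exact (apply_smul_eq_of_fderiv_apply_self_eq_zero hω hray x hr).symm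
  exact hω.continuous.ext_on (dense_compl_singleton 0) continuous_const hne

end

/-- If `ω : ℝⁿ → E` (E a real normed space, n ≥ 1) is differentiable
everywhere, is annihilated by the radial vector field (`(Dω)(x)(x) = 0` for all `x`),
and tends to `0` as `‖x‖ → ∞`, then `ω = 0`. -/
theorem radial_constant_vanishing_at_infinity_implies_zero
    {E : Type*} [NormedAddCommGroup E] [NormedSpace ℝ E]
    {n : ℕ} (hn : 1 ≤ n)
    (ω : (Fin n → ℝ) → E) (hω : Differentiable ℝ ω)
    (hray : ∀ x : Fin n → ℝ, fderiv ℝ ω x x = 0)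
    (hinf : Filter.Tendsto ω (Filter.comap (fun x => ‖x‖) Filter.atTop) (nhds 0)) :
    ω = 0 := by
  have : Nonempty (Fin n) := ⟨⟨0, hn⟩⟩
  exact eq_zero_of_fderiv_apply_self_eq_zero_of_tendsto hω hray hinf
end

section
/- Let F : ℝⁿ → (Fin n → Fin n → Matrix (Fin N) (Fin N) ℂ) be a smooth map with F_{μν} = −F_{νμ}, and define A_μ(x) := ∫₀¹ t ∑_ν x^ν F_{νμ}(tx) dt. Suppose F satisfies the Bianchi identity for curvature: for all x and all μ, ν, ρ, ∂_μ F_{νρ} + ∂_ν F_{ρμ} + ∂_ρ F_{μν} + i g ([A_μ, F_{νρ}] + [A_ν, F_{ρμ}] + [A_ρ, F_{μν}]) = 0. Then F is the field strength of A: F_{μν}(x) = ∂_μ A_ν(x) − ∂_ν A_μ(x) + i g (A_μ(x) A_ν(x) − A_ν(x) A_μ(x)) for all x, μ, ν, and A satisfies the Fock–Schwinger gauge condition ∑_ν x^ν A_ν(x) = 0. -/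
/-- The partial derivative `∂_μ f` of a complex-valued function on `ℝⁿ`. -/
noncomputable def pd {n : ℕ} (μ : Fin n) (f : (Fin n → ℝ) → ℂ) (x : Fin n → ℝ) : ℂ :=
  fderiv ℝ f x (Pi.single μ 1)

open MeasureTheory intervalIntegral

lemma fs_clm_eval {n : ℕ} (L : (Fin n → ℝ) →L[ℝ] ℂ) (v : Fin n → ℝ) :
    L v = ∑ ρ, (v ρ : ℂ) * L (Pi.single ρ 1) := by
  have hv : v = ∑ ρ : Fin n, v ρ • (Pi.single ρ 1 : Fin n → ℝ) := by
    ext j; simp [Finset.sum_apply, Pi.single_apply]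
  conv_lhs => rw [hv]
  rw [map_sum]
  exact Finset.sum_congr rfl fun ρ _ => by rw [L.map_smul, Complex.real_smul]

lemma fs_pd_neg {n : ℕ} (μ : Fin n) (f : (Fin n → ℝ) → ℂ) (x : Fin n → ℝ) :
    pd μ (fun y => -f y) x = -pd μ f x := by
  unfold pd; rw [fderiv_fun_neg]; simp

lemma fs_cont_pd {n : ℕ} (f : (Fin n → ℝ) → ℂ) (hf : ContDiff ℝ (⊤ : ℕ∞) f) (ρ : Fin n) :
    Continuous (fun y => pd ρ f y) := by
  unfold pd
  exact (hf.continuous_fderiv (by simp)).clm_apply continuous_const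

lemma fs_param {n : ℕ} (μ : Fin n) (H : (Fin n → ℝ) → ℝ → ℂ)
    (hH : ContDiff ℝ (⊤ : ℕ∞) fun p : (Fin n → ℝ) × ℝ => H p.1 p.2) (x₀ : Fin n → ℝ) :
    pd μ (fun x => ∫ t in (0:ℝ)..1, H x t) x₀
      = ∫ t in (0:ℝ)..1, pd μ (fun y => H y t) x₀ := by
  set D : (Fin n → ℝ) → ℝ → (Fin n → ℝ) →L[ℝ] ℂ := fun x t =>
    (fderiv ℝ (fun p : (Fin n → ℝ) × ℝ => H p.1 p.2) (x, t)).comp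
      ((ContinuousLinearMap.id ℝ (Fin n → ℝ)).prod 0) with hD
  have hdiff : ∀ (x : Fin n → ℝ) (t : ℝ), HasFDerivAt (fun y => H y t) (D x t) x := by
    intro x t
    have h1 : HasFDerivAt (fun p : (Fin n → ℝ) × ℝ => H p.1 p.2)
        (fderiv ℝ (fun p : (Fin n → ℝ) × ℝ => H p.1 p.2) (x, t)) (x, t) :=
      (hH.differentiable (by simp) (x, t)).hasFDerivAt
    have h2 : HasFDerivAt (fun y : Fin n → ℝ => (y, t))
        ((ContinuousLinearMap.id ℝ (Fin n → ℝ)).prod 0) x :=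
      (hasFDerivAt_id x).prodMk (hasFDerivAt_const t x)
    exact h1.comp x h2
  have hDcont : Continuous fun p : (Fin n → ℝ) × ℝ => D p.1 p.2 :=
    (hH.continuous_fderiv (by simp)).clm_comp continuous_const
  obtain ⟨C, hC⟩ := ((isCompact_closedBall x₀ 1).prod
    (isCompact_Icc (a := (-1:ℝ)) (b := 2))).exists_bound_of_continuousOn hDcont.continuousOn
  have key := intervalIntegral.hasFDerivAt_integral_of_dominated_of_fderiv_le
    (F := H) (F' := D) (x₀ := x₀) (a := 0) (b := 1) (bound := fun _ => C)
    (μ := volume) (s := Metric.ball x₀ 1) (Metric.ball_mem_nhds x₀ one_pos)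
    (Filter.Eventually.of_forall fun x =>
      (hH.continuous.comp (Continuous.prodMk_right x)).aestronglyMeasurable)
    ((hH.continuous.comp (Continuous.prodMk_right x₀)).intervalIntegrable 0 1)
    ((hDcont.comp (Continuous.prodMk_right x₀)).aestronglyMeasurable)
    (MeasureTheory.ae_of_all _ (fun t ht x hx => by
      have ht' : t ∈ Set.Icc (-1:ℝ) 2 := by
        rw [Set.uIoc_of_le (by norm_num : (0:ℝ) ≤ 1)] at ht
        exact ⟨by linarith [ht.1], by linarith [ht.2]⟩
      exact hC (x, t) ⟨Metric.ball_subset_closedBall hx, ht'⟩))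
    intervalIntegrable_const
    (MeasureTheory.ae_of_all _ (fun t ht x hx => hdiff x t))
  have hInt : IntervalIntegrable (fun t => D x₀ t) volume 0 1 :=
    (hDcont.comp (Continuous.prodMk_right x₀)).intervalIntegrable 0 1
  unfold pd
  rw [key.fderiv, ContinuousLinearMap.intervalIntegral_apply hInt]
  exact intervalIntegral.integral_congr fun t ht => by rw [(hdiff x₀ t).fderiv]

section
variable {n N : ℕ} (F : (Fin n → ℝ) → Fin n → Fin n → Matrix (Fin N) (Fin N) ℂ)

lemma fs_smooth_integrand (hFsmooth : ∀ μ ν a b, ContDiff ℝ (⊤ : ℕ∞) fun x => F x μ ν a b)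
    (ν : Fin n) (a b : Fin N) :
    ContDiff ℝ (⊤ : ℕ∞) fun p : (Fin n → ℝ) × ℝ =>
      p.2 • ∑ ρ, ((p.1 ρ : ℂ) * F (p.2 • p.1) ρ ν a b) := by
  refine ContDiff.smul contDiff_snd ?_
  refine ContDiff.sum fun ρ _ => ContDiff.mul ?_ ?_
  · have hp : ContDiff ℝ (⊤ : ℕ∞) fun p : (Fin n → ℝ) × ℝ => p.1 ρ :=
      (ContinuousLinearMap.proj ρ : (Fin n → ℝ) →L[ℝ] ℝ).contDiff.comp contDiff_fst
    exact Complex.ofRealCLM.contDiff.comp hp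
  · exact (hFsmooth ρ ν a b).comp (contDiff_snd.smul contDiff_fst)

lemma fs_pd_integrand (hFsmooth : ∀ μ ν a b, ContDiff ℝ (⊤ : ℕ∞) fun x => F x μ ν a b)
    (ν : Fin n) (a b : Fin N) (t : ℝ) (x : Fin n → ℝ) (μ : Fin n) :
    pd μ (fun y => t • ∑ ρ, ((y ρ : ℂ) * F (t • y) ρ ν a b)) x
      = (t:ℂ) * F (t • x) μ ν a b
        + (t:ℂ)^2 * ∑ ρ, (x ρ:ℂ) * pd μ (fun y => F y ρ ν a b) (t • x) := by
  have hsm : HasFDerivAt (fun y : Fin n → ℝ => t • y)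
      (t • ContinuousLinearMap.id ℝ (Fin n → ℝ)) x :=
    (t • ContinuousLinearMap.id ℝ (Fin n → ℝ)).hasFDerivAt
  have hmul : ∀ ρ : Fin n, HasFDerivAt (fun y : Fin n → ℝ => (y ρ : ℂ) * F (t • y) ρ ν a b)
      ((x ρ : ℂ) • ((fderiv ℝ (fun z => F z ρ ν a b) (t • x)).comp
          (t • ContinuousLinearMap.id ℝ (Fin n → ℝ)))
        + (F (t • x) ρ ν a b) • (Complex.ofRealCLM.comp (ContinuousLinearMap.proj ρ : (Fin n → ℝ) →L[ℝ] ℝ))) x := by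
    intro ρ
    have hc : HasFDerivAt (fun y : Fin n → ℝ => ((y ρ : ℝ) : ℂ))
        (Complex.ofRealCLM.comp (ContinuousLinearMap.proj ρ : (Fin n → ℝ) →L[ℝ] ℝ)) x := by
      exact (Complex.ofRealCLM.comp (ContinuousLinearMap.proj ρ : (Fin n → ℝ) →L[ℝ] ℝ)).hasFDerivAt
    have hG : HasFDerivAt (fun y : Fin n → ℝ => F (t • y) ρ ν a b)
        ((fderiv ℝ (fun z => F z ρ ν a b) (t • x)).comp
          (t • ContinuousLinearMap.id ℝ (Fin n → ℝ))) x :=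
      HasFDerivAt.comp x (((hFsmooth ρ ν a b).differentiable (by simp) _).hasFDerivAt) hsm
    exact hc.mul hG
  have htotal := (HasFDerivAt.fun_sum (fun ρ (_ : ρ ∈ Finset.univ) => hmul ρ)).fun_const_smul t
  unfold pd
  rw [htotal.fderiv]
  simp only [ContinuousLinearMap.coe_smul', Pi.smul_apply, ContinuousLinearMap.coe_sum',
    Finset.sum_apply, ContinuousLinearMap.add_apply, ContinuousLinearMap.coe_comp',
    Function.comp_apply, ContinuousLinearMap.coe_id', id_eq, ContinuousLinearMap.map_smul,
    Complex.ofRealCLM_apply, Pi.single_apply, Complex.real_smul, smul_eq_mul]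
  rw [Finset.sum_add_distrib]
  simp only [ContinuousLinearMap.proj_apply, Pi.single_apply, apply_ite, Complex.ofReal_one,
    Complex.ofReal_zero, mul_ite, mul_one, mul_zero, Finset.sum_ite_eq', Finset.mem_univ, if_true]
  rw [mul_add, Finset.mul_sum, Finset.mul_sum]
  rw [add_comm]
  congr 1
  exact Finset.sum_congr rfl fun ρ _ => by ring

variable {n N : ℕ} (F : (Fin n → ℝ) → Fin n → Fin n → Matrix (Fin N) (Fin N) ℂ)
  (A : (Fin n → ℝ) → Fin n → Matrix (Fin N) (Fin N) ℂ)

lemma fs_hasDerivAt_t2F (hFsmooth : ∀ μ ν a b, ContDiff ℝ (⊤ : ℕ∞) fun x => F x μ ν a b)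
    (x : Fin n → ℝ) (μ ν : Fin n) (a b : Fin N) (t : ℝ) :
    HasDerivAt (fun s : ℝ => (s:ℂ)^2 * F (s • x) μ ν a b)
      (2*(t:ℂ)*F (t • x) μ ν a b
        + (t:ℂ)^2 * ∑ ρ, (x ρ:ℂ) * pd ρ (fun y => F y μ ν a b) (t • x)) t := by
  have h0 : HasDerivAt (fun s : ℝ => ((s : ℝ) : ℂ)) (1:ℂ) t := by
    exact (by simpa using Complex.ofRealCLM.hasDerivAt (x := t) : HasDerivAt (⇑Complex.ofRealCLM) (1:ℂ) t)
  have h1 : HasDerivAt (fun s : ℝ => ((s:ℝ):ℂ)^2) (2*(t:ℂ)) t := by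
    have := h0.fun_mul h0
    simp only [one_mul, mul_one] at this
    have h2 : (fun s : ℝ => ((s:ℝ):ℂ) * ((s:ℝ):ℂ)) = fun s : ℝ => ((s:ℝ):ℂ)^2 := by
      funext s; ring
    rw [h2] at this
    exact this.congr_deriv (by ring)
  have hx : HasDerivAt (fun s : ℝ => s • x) x t := by
    simpa using (hasDerivAt_id t).smul_const x
  have h2 : HasDerivAt (fun s : ℝ => F (s • x) μ ν a b)
      (fderiv ℝ (fun z => F z μ ν a b) (t • x) x) t :=
    (((hFsmooth μ ν a b).differentiable (by simp) _).hasFDerivAt).comp_hasDerivAt t hx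
  have h3 := h1.fun_mul h2
  refine h3.congr_deriv ?_
  rw [fs_clm_eval]
  unfold pd
  ring

lemma fs_hasDerivAt_sA (hFsmooth : ∀ μ ν a b, ContDiff ℝ (⊤ : ℕ∞) fun x => F x μ ν a b)
    (hA : ∀ (x : Fin n → ℝ) μ a b,
      A x μ a b = ∫ t in (0:ℝ)..1, t • ∑ ν, (x ν : ℂ) * F (t • x) ν μ a b)
    (x : Fin n → ℝ) (μ : Fin n) (a c : Fin N) (t : ℝ) :
    HasDerivAt (fun s : ℝ => (s:ℂ) * A (s • x) μ a c)
      ((t:ℂ) * ∑ ρ, (x ρ:ℂ) * F (t • x) ρ μ a c) t := by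
  set k : ℝ → ℂ := fun u => (u:ℂ) * ∑ ρ, (x ρ:ℂ) * F (u • x) ρ μ a c with hk
  have hkcont : Continuous k := by
    exact (Complex.continuous_ofReal).mul (continuous_finset_sum _ fun ρ _ =>
      continuous_const.mul (((hFsmooth ρ μ a c).continuous).comp
        (continuous_id.smul continuous_const)))
  have heq : ∀ s : ℝ, (s:ℂ) * A (s • x) μ a c = ∫ u in (0:ℝ)..s, k u := by
    intro s
    rw [hA, ← intervalIntegral.integral_const_mul]
    have hsub : ∀ t' ∈ Set.uIcc (0:ℝ) 1, HasDerivAt (fun r : ℝ => r * s) s t' := by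
      intro t' _
      simpa using (hasDerivAt_id t').mul_const s
    have hcs := intervalIntegral.integral_comp_smul_deriv
      (f := fun r : ℝ => r * s) (f' := fun _ : ℝ => s) (g := k) hsub continuousOn_const hkcont
    simp only [Function.comp_apply, zero_mul, one_mul] at hcs
    rw [← hcs]
    refine intervalIntegral.integral_congr fun r hr => ?_
    show (s:ℂ) * (r • ∑ ρ, (((s • x) ρ : ℂ)) * F (r • s • x) ρ μ a c) = s • k (r * s)
    rw [smul_smul]
    simp only [hk, Complex.real_smul, Pi.smul_apply, smul_eq_mul]
    push_cast
    simp only [Finset.mul_sum]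
    exact Finset.sum_congr rfl fun ρ _ => by ring
  have hfun : (fun s : ℝ => (s:ℂ) * A (s • x) μ a c) = fun s => ∫ u in (0:ℝ)..s, k u :=
    funext heq
  rw [hfun]
  have := (hkcont.integral_hasStrictDerivAt 0 t).hasDerivAt
  simpa [hk] using this

lemma fs_gauge (hFsmooth : ∀ μ ν a b, ContDiff ℝ (⊤ : ℕ∞) fun x => F x μ ν a b)
    (hanti : ∀ (x : Fin n → ℝ) μ ν, F x μ ν = - F x ν μ)
    (hA : ∀ (x : Fin n → ℝ) μ a b,
      A x μ a b = ∫ t in (0:ℝ)..1, t • ∑ ν, (x ν : ℂ) * F (t • x) ν μ a b)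
    (x : Fin n → ℝ) (a b : Fin N) : ∑ ν, (x ν : ℂ) * A x ν a b = 0 := by
  have hint : ∀ ν : Fin n, IntervalIntegrable
      (fun t : ℝ => t • ∑ ρ, ((x ρ:ℂ) * F (t•x) ρ ν a b)) volume 0 1 := by
    intro ν
    apply Continuous.intervalIntegrable
    exact continuous_id.smul (continuous_finset_sum _ fun ρ _ =>
      continuous_const.mul (((hFsmooth ρ ν a b).continuous).comp
        (continuous_id.smul continuous_const)))
  have hzero : ∀ t : ℝ, ∑ ν, (x ν:ℂ) * (t • ∑ ρ, ((x ρ:ℂ) * F (t•x) ρ ν a b)) = 0 := by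
    intro t
    have hZ : ∑ ν, ∑ ρ, (x ν:ℂ) * ((x ρ:ℂ) * F (t•x) ρ ν a b) = 0 := by
      have key : ∀ i j : Fin n, (x j:ℂ) * ((x i:ℂ) * F (t•x) i j a b)
          = -((x i:ℂ) * ((x j:ℂ) * F (t•x) j i a b)) := by
        intro i j
        have h' : F (t•x) i j a b = -F (t•x) j i a b := by
          rw [hanti (t•x) i j]; rfl
        rw [h']; ring
      have hneg : ∑ ν, ∑ ρ, (x ν:ℂ) * ((x ρ:ℂ) * F (t•x) ρ ν a b)
          = - ∑ ν, ∑ ρ, (x ν:ℂ) * ((x ρ:ℂ) * F (t•x) ρ ν a b) := by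
        conv_lhs => rw [Finset.sum_comm]
        rw [← Finset.sum_neg_distrib]
        refine Finset.sum_congr rfl fun i _ => ?_
        rw [← Finset.sum_neg_distrib]
        exact Finset.sum_congr rfl fun j _ => key i j
      linear_combination hneg / 2
    calc ∑ ν, (x ν:ℂ) * (t • ∑ ρ, ((x ρ:ℂ) * F (t•x) ρ ν a b))
        = (t:ℂ) * ∑ ν, ∑ ρ, (x ν:ℂ) * ((x ρ:ℂ) * F (t•x) ρ ν a b) := by
          rw [Finset.mul_sum]
          refine Finset.sum_congr rfl fun ν _ => ?_
          rw [Complex.real_smul]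
          simp only [Finset.mul_sum]
          exact Finset.sum_congr rfl fun ρ _ => by ring
      _ = 0 := by rw [hZ, mul_zero]
  calc ∑ ν, (x ν:ℂ) * A x ν a b
      = ∑ ν, ∫ t in (0:ℝ)..1, (x ν:ℂ) * (t • ∑ ρ, ((x ρ:ℂ) * F (t•x) ρ ν a b)) := by
        refine Finset.sum_congr rfl fun ν _ => ?_
        rw [hA, intervalIntegral.integral_const_mul]
    _ = ∫ t in (0:ℝ)..1, ∑ ν, (x ν:ℂ) * (t • ∑ ρ, ((x ρ:ℂ) * F (t•x) ρ ν a b)) :=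
        (intervalIntegral.integral_finset_sum (fun ν _ => (hint ν).const_mul _)).symm
    _ = 0 := by simp only [hzero, intervalIntegral.integral_zero]
end

/-- if a smooth antisymmetric `F` on `ℝⁿ` satisfies the Bianchi identity for
curvature (with `A_μ(x) := ∫₀¹ t ∑_ν x^ν F_{νμ}(tx) dt`), then `F` is the field strength
of `A`, and `A` satisfies the Fock–Schwinger gauge condition. -/
theorem bianchi_implies_field_strength_of_radial_connection
    {n N : ℕ} (hn : 1 ≤ n) (g : ℝ)
    (F : (Fin n → ℝ) → Fin n → Fin n → Matrix (Fin N) (Fin N) ℂ)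
    (hFsmooth : ∀ μ ν a b, ContDiff ℝ (⊤ : ℕ∞) fun x => F x μ ν a b)
    (hanti : ∀ (x : Fin n → ℝ) μ ν, F x μ ν = - F x ν μ)
    (A : (Fin n → ℝ) → Fin n → Matrix (Fin N) (Fin N) ℂ)
    (hA : ∀ (x : Fin n → ℝ) μ a b,
      A x μ a b = ∫ t in (0:ℝ)..1, t • ∑ ν, (x ν : ℂ) * F (t • x) ν μ a b)
    (hbianchi : ∀ (x : Fin n → ℝ) μ ν ρ a b,
      pd μ (fun y => F y ν ρ a b) x + pd ν (fun y => F y ρ μ a b) x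
        + pd ρ (fun y => F y μ ν a b) x
        + Complex.I * (g : ℂ) *
          ((A x μ * F x ν ρ - F x ν ρ * A x μ) a b
            + (A x ν * F x ρ μ - F x ρ μ * A x ν) a b
            + (A x ρ * F x μ ν - F x μ ν * A x ρ) a b) = 0) :
    (∀ (x : Fin n → ℝ) μ ν a b,
      F x μ ν a b = pd μ (fun y => A y ν a b) x - pd ν (fun y => A y μ a b) x
        + Complex.I * (g : ℂ) * ((A x μ * A x ν) a b - (A x ν * A x μ) a b))
    ∧ (∀ (x : Fin n → ℝ) a b, ∑ ν, (x ν : ℂ) * A x ν a b = 0) := by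
  have hgauge : ∀ (x : Fin n → ℝ) a b, ∑ ν, (x ν : ℂ) * A x ν a b = 0 :=
    fun x a b => fs_gauge F A hFsmooth hanti hA x a b
  refine ⟨?_, hgauge⟩
  intro x μ ν a b
  -- continuity helpers
  have hFc : ∀ (ρ σ : Fin n) (a' b' : Fin N), Continuous fun s : ℝ => F (s • x) ρ σ a' b' :=
    fun ρ σ a' b' => (hFsmooth ρ σ a' b').continuous.comp (continuous_id.smul continuous_const)
  have hpdc : ∀ (κ ρ σ : Fin n) (a' b' : Fin N),
      Continuous fun s : ℝ => pd κ (fun y => F y ρ σ a' b') (s • x) :=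
    fun κ ρ σ a' b' => (fs_cont_pd _ (hFsmooth ρ σ a' b') κ).comp
      (continuous_id.smul continuous_const)
  -- derivative of A under the integral sign
  have hpdA : ∀ (κ σ : Fin n) (a' b' : Fin N), pd κ (fun y => A y σ a' b') x
      = ∫ t in (0:ℝ)..1, ((t:ℂ) * F (t • x) κ σ a' b'
          + (t:ℂ)^2 * ∑ ρ, (x ρ:ℂ) * pd κ (fun y => F y ρ σ a' b') (t • x)) := by
    intro κ σ a' b'
    have hfun : (fun y => A y σ a' b')
        = fun y => ∫ t in (0:ℝ)..1,
            (fun (z : Fin n → ℝ) (t : ℝ) => t • ∑ ρ, ((z ρ:ℂ) * F (t•z) ρ σ a' b')) y t :=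
      funext fun y => hA y σ a' b'
    rw [hfun, fs_param κ _ (fs_smooth_integrand F hFsmooth σ a' b') x]
    exact intervalIntegral.integral_congr fun t _ => fs_pd_integrand F hFsmooth σ a' b' t x κ
  have hEc : ∀ (κ σ : Fin n) (a' b' : Fin N), Continuous (fun t : ℝ =>
      (t:ℂ) * F (t • x) κ σ a' b'
        + (t:ℂ)^2 * ∑ ρ, (x ρ:ℂ) * pd κ (fun y => F y ρ σ a' b') (t • x)) :=
    fun κ σ a' b' => (Complex.continuous_ofReal.mul (hFc κ σ a' b')).add
      ((Complex.continuous_ofReal.pow 2).mul (continuous_finset_sum _ fun ρ _ =>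
        continuous_const.mul (hpdc κ ρ σ a' b')))
  -- P, P', R, R'
  set P : Fin n → Fin N → Fin N → ℝ → ℂ := fun κ a' c s => (s:ℂ) * A (s • x) κ a' c with hPdef
  set P' : Fin n → Fin N → Fin N → ℝ → ℂ :=
    fun κ a' c s => (s:ℂ) * ∑ ρ, (x ρ:ℂ) * F (s • x) ρ κ a' c with hP'def
  have hP : ∀ κ a' c t, HasDerivAt (P κ a' c) (P' κ a' c t) t :=
    fun κ a' c t => fs_hasDerivAt_sA F A hFsmooth hA x κ a' c t
  have hPc : ∀ κ a' c, Continuous (P κ a' c) := fun κ a' c => by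
    rw [continuous_iff_continuousAt]; exact fun t => (hP κ a' c t).continuousAt
  have hP'c : ∀ κ a' c, Continuous (P' κ a' c) := fun κ a' c =>
    Complex.continuous_ofReal.mul (continuous_finset_sum _ fun ρ _ =>
      continuous_const.mul (hFc ρ κ a' c))
  set R : ℝ → ℂ := fun s => ∑ c, (P μ a c s * P ν c b s - P ν a c s * P μ c b s) with hRdef
  set R' : ℝ → ℂ := fun s => ∑ c, ((P' μ a c s * P ν c b s + P μ a c s * P' ν c b s)
      - (P' ν a c s * P μ c b s + P ν a c s * P' μ c b s)) with hR'def
  have hR : ∀ t, HasDerivAt R (R' t) t := fun t => HasDerivAt.fun_sum fun c _ =>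
    ((hP μ a c t).mul (hP ν c b t)).sub ((hP ν a c t).mul (hP μ c b t))
  have hR'c : Continuous R' := continuous_finset_sum _ fun c _ =>
    (((hP'c μ a c).mul (hPc ν c b)).add ((hPc μ a c).mul (hP'c ν c b))).sub
      (((hP'c ν a c).mul (hPc μ c b)).add ((hPc ν a c).mul (hP'c μ c b)))
  have hRint : ∫ t in (0:ℝ)..1, R' t = R 1 - R 0 :=
    intervalIntegral.integral_eq_sub_of_hasDerivAt (fun t _ => hR t)
      (hR'c.intervalIntegrable 0 1)
  have hR0 : R 0 = 0 := by simp [hRdef, hPdef]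
  have hR1 : R 1 = (A x μ * A x ν) a b - (A x ν * A x μ) a b := by
    simp [hRdef, hPdef, Matrix.mul_apply, Finset.sum_sub_distrib]
  -- FTC for t² F(tx)
  have hWc : Continuous (fun t : ℝ => 2*(t:ℂ)*F (t • x) μ ν a b
      + (t:ℂ)^2 * ∑ ρ, (x ρ:ℂ) * pd ρ (fun y => F y μ ν a b) (t • x)) :=
    ((continuous_const.mul Complex.continuous_ofReal).mul (hFc μ ν a b)).add
      ((Complex.continuous_ofReal.pow 2).mul (continuous_finset_sum _ fun ρ _ =>
        continuous_const.mul (hpdc ρ μ ν a b)))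
  have hWint : ∫ t in (0:ℝ)..1, (2*(t:ℂ)*F (t • x) μ ν a b
      + (t:ℂ)^2 * ∑ ρ, (x ρ:ℂ) * pd ρ (fun y => F y μ ν a b) (t • x)) = F x μ ν a b := by
    rw [intervalIntegral.integral_eq_sub_of_hasDerivAt
      (f := fun s : ℝ => (s:ℂ)^2 * F (s • x) μ ν a b)
      (fun t _ => fs_hasDerivAt_t2F F hFsmooth x μ ν a b t) (hWc.intervalIntegrable 0 1)]
    norm_num
  -- antisymmetry of pd
  have hpd_swap : ∀ (κ ρ σ : Fin n) (y : Fin n → ℝ) (a' b' : Fin N),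
      pd κ (fun z => F z ρ σ a' b') y = - pd κ (fun z => F z σ ρ a' b') y := by
    intro κ ρ σ y a' b'
    have hfun : (fun z => F z ρ σ a' b') = fun z => -(F z σ ρ a' b') := by
      funext z; rw [hanti z ρ σ]; rfl
    rw [hfun, fs_pd_neg]
  -- Bianchi rearranged
  have key : ∀ (t : ℝ) (ρ : Fin n),
      pd μ (fun y => F y ρ ν a b) (t • x) - pd ν (fun y => F y ρ μ a b) (t • x)
        = pd ρ (fun y => F y μ ν a b) (t • x)
          + Complex.I * (g:ℂ) * ((A (t•x) μ * F (t•x) ν ρ - F (t•x) ν ρ * A (t•x) μ) a b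
            + (A (t•x) ν * F (t•x) ρ μ - F (t•x) ρ μ * A (t•x) ν) a b
            + (A (t•x) ρ * F (t•x) μ ν - F (t•x) μ ν * A (t•x) ρ) a b) := by
    intro t ρ
    have hb := hbianchi (t•x) μ ν ρ a b
    rw [hpd_swap μ ρ ν (t•x) a b]
    linear_combination -hb
  -- gauge-based vanishing
  have hzero : ∀ (t : ℝ) (a' c : Fin N), (t:ℂ) * ∑ ρ, (x ρ:ℂ) * A (t•x) ρ a' c = 0 := by
    intro t a' c
    have hg := hgauge (t•x) a' c
    rw [Finset.mul_sum, ← hg]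
    refine Finset.sum_congr rfl fun ρ _ => ?_
    show (t:ℂ) * ((x ρ:ℂ) * A (t•x) ρ a' c) = (((t • x) ρ : ℝ) : ℂ) * A (t•x) ρ a' c
    have h1 : ((t • x) ρ : ℝ) = t * x ρ := rfl
    rw [h1]; push_cast; ring
  have claimA : ∀ t : ℝ, (t:ℂ)^2 * ∑ ρ, (x ρ:ℂ) *
      ((A (t•x) ρ * F (t•x) μ ν - F (t•x) μ ν * A (t•x) ρ) a b) = 0 := by
    intro t
    have expand : (t:ℂ)^2 * ∑ ρ, (x ρ:ℂ) *
        ((A (t•x) ρ * F (t•x) μ ν - F (t•x) μ ν * A (t•x) ρ) a b)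
        = ∑ c, (((t:ℂ) * ∑ ρ, (x ρ:ℂ) * A (t•x) ρ a c) * ((t:ℂ) * F (t•x) μ ν c b))
          - ∑ c, (((t:ℂ) * F (t•x) μ ν a c) * ((t:ℂ) * ∑ ρ, (x ρ:ℂ) * A (t•x) ρ c b)) := by
      simp only [Matrix.sub_apply, Matrix.mul_apply, Finset.mul_sum, Finset.sum_mul, mul_sub,
        Finset.sum_sub_distrib]
      congr 1
      · rw [Finset.sum_comm]
        exact Finset.sum_congr rfl fun ρ _ => Finset.sum_congr rfl fun c _ => by ring
      · rw [Finset.sum_comm]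
        exact Finset.sum_congr rfl fun ρ _ => Finset.sum_congr rfl fun c _ => by ring
    rw [expand]
    simp [hzero]
  have claimB : ∀ t : ℝ, (t:ℂ)^2 * ∑ ρ, (x ρ:ℂ) *
      ((A (t•x) μ * F (t•x) ν ρ - F (t•x) ν ρ * A (t•x) μ) a b
        + (A (t•x) ν * F (t•x) ρ μ - F (t•x) ρ μ * A (t•x) ν) a b) = - R' t := by
    intro t
    have hF' : ∀ (ρ : Fin n) (c d : Fin N), F (t•x) ν ρ c d = -F (t•x) ρ ν c d :=
      fun ρ c d => by rw [hanti (t•x) ν ρ]; rfl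
    simp only [hR'def, hP'def, hPdef, Matrix.sub_apply, Matrix.mul_apply, Matrix.add_apply]
    simp only [hF']
    simp only [Finset.mul_sum, Finset.sum_mul, mul_add, add_mul, mul_sub, sub_mul, mul_neg,
      neg_mul, Finset.sum_add_distrib, Finset.sum_sub_distrib, Finset.sum_neg_distrib]
    rw [Finset.sum_comm]
    have e1 : ∑ c : Fin N, ∑ i : Fin n, (t:ℂ)^2 * ((x i:ℂ) * (A (t•x) μ a c * F (t•x) i ν c b))
        = ∑ c : Fin N, ∑ i : Fin n, (t:ℂ) * A (t•x) μ a c * ((t:ℂ) * ((x i:ℂ) * F (t•x) i ν c b)) :=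
      Finset.sum_congr rfl fun c _ => Finset.sum_congr rfl fun i _ => by ring
    have e2 : ∑ i : Fin n, ∑ c : Fin N, (t:ℂ)^2 * ((x i:ℂ) * (F (t•x) i ν a c * A (t•x) μ c b))
        = ∑ c : Fin N, ∑ i : Fin n, (t:ℂ) * ((x i:ℂ) * F (t•x) i ν a c) * ((t:ℂ) * A (t•x) μ c b) := by
      rw [Finset.sum_comm]
      exact Finset.sum_congr rfl fun c _ => Finset.sum_congr rfl fun i _ => by ring
    have e3 : ∑ i : Fin n, ∑ c : Fin N, (t:ℂ)^2 * ((x i:ℂ) * (A (t•x) ν a c * F (t•x) i μ c b))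
        = ∑ c : Fin N, ∑ i : Fin n, (t:ℂ) * A (t•x) ν a c * ((t:ℂ) * ((x i:ℂ) * F (t•x) i μ c b)) := by
      rw [Finset.sum_comm]
      exact Finset.sum_congr rfl fun c _ => Finset.sum_congr rfl fun i _ => by ring
    have e4 : ∑ i : Fin n, ∑ c : Fin N, (t:ℂ)^2 * ((x i:ℂ) * (F (t•x) i μ a c * A (t•x) ν c b))
        = ∑ c : Fin N, ∑ i : Fin n, (t:ℂ) * ((x i:ℂ) * F (t•x) i μ a c) * ((t:ℂ) * A (t•x) ν c b) := by
      rw [Finset.sum_comm]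
      exact Finset.sum_congr rfl fun c _ => Finset.sum_congr rfl fun i _ => by ring
    rw [e1, e2, e3, e4]
    ring
  -- combine Bianchi over the sum
  have hsum : ∀ t : ℝ,
      (∑ ρ, (x ρ:ℂ) * pd μ (fun y => F y ρ ν a b) (t • x))
        - ∑ ρ, (x ρ:ℂ) * pd ν (fun y => F y ρ μ a b) (t • x)
      = (∑ ρ, (x ρ:ℂ) * pd ρ (fun y => F y μ ν a b) (t • x))
        + Complex.I * (g:ℂ) * (∑ ρ, (x ρ:ℂ) *
            ((A (t•x) μ * F (t•x) ν ρ - F (t•x) ν ρ * A (t•x) μ) a b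
              + (A (t•x) ν * F (t•x) ρ μ - F (t•x) ρ μ * A (t•x) ν) a b))
        + Complex.I * (g:ℂ) * (∑ ρ, (x ρ:ℂ) *
            ((A (t•x) ρ * F (t•x) μ ν - F (t•x) μ ν * A (t•x) ρ) a b)) := by
    intro t
    rw [← Finset.sum_sub_distrib, Finset.mul_sum, Finset.mul_sum,
      ← Finset.sum_add_distrib, ← Finset.sum_add_distrib]
    refine Finset.sum_congr rfl fun ρ _ => ?_
    rw [← mul_sub, key t ρ]
    ring
  have hdiff : pd μ (fun y => A y ν a b) x - pd ν (fun y => A y μ a b) x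
      = F x μ ν a b - Complex.I * (g:ℂ) * ((A x μ * A x ν) a b - (A x ν * A x μ) a b) := by
    rw [hpdA μ ν a b, hpdA ν μ a b,
      ← intervalIntegral.integral_sub ((hEc μ ν a b).intervalIntegrable 0 1)
        ((hEc ν μ a b).intervalIntegrable 0 1)]
    have hptwise : ∀ t : ℝ,
        ((t:ℂ) * F (t • x) μ ν a b
            + (t:ℂ)^2 * ∑ ρ, (x ρ:ℂ) * pd μ (fun y => F y ρ ν a b) (t • x))
          - ((t:ℂ) * F (t • x) ν μ a b
            + (t:ℂ)^2 * ∑ ρ, (x ρ:ℂ) * pd ν (fun y => F y ρ μ a b) (t • x))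
        = (2*(t:ℂ)*F (t • x) μ ν a b
            + (t:ℂ)^2 * ∑ ρ, (x ρ:ℂ) * pd ρ (fun y => F y μ ν a b) (t • x))
          - Complex.I * (g:ℂ) * R' t := by
      intro t
      have hFnm : F (t•x) ν μ a b = -F (t•x) μ ν a b := by rw [hanti (t•x) ν μ]; rfl
      rw [hFnm]
      linear_combination (t:ℂ)^2 * hsum t + Complex.I * (g:ℂ) * claimB t
        + Complex.I * (g:ℂ) * claimA t
    rw [intervalIntegral.integral_congr (fun t _ => hptwise t)]
    rw [intervalIntegral.integral_sub (hWc.intervalIntegrable 0 1)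
      ((continuous_const.fun_mul hR'c).intervalIntegrable 0 1)]
    rw [hWint, intervalIntegral.integral_const_mul, hRint, hR0, hR1]
    ring
  rw [hdiff]
  ring
end
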